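/- arXiv:2103.16661 — 7 statements merged into one kernel-verified Lean document; each statement's English description precedes it below -/
import Mathlib

section
/- For (q⁰, q¹) ∈ ℝ², the solution set {ψ ∈ Ψ : T⁰¹(ψ) = q⁰ and T¹¹(ψ) = q¹} has more than one element if and only if q¹ > 0 and (q¹)² < (q⁰)² < (4/3)(q¹)² (equivalently 3/4 < (q¹/q⁰)² < 1); and in that case it has exactly two elements. (Lemma 1, characterization of Rankine–Hugoniot data admitting shocks.) -/
open Real Matrix Filter Topology Set

noncomputable section

/-- The state space condition `ψ⁰ > |ψ¹|`. -/
def StateSpace (ψ : Fin 2 → ℝ) : Prop := |ψ 1| < ψ 0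

/-- Temperature variable `θ(ψ) = ((ψ⁰)² − (ψ¹)²)^(−1/2)`. -/
def θf (ψ : Fin 2 → ℝ) : ℝ := (Real.sqrt ((ψ 0) ^ 2 - (ψ 1) ^ 2))⁻¹

/-- `u(ψ) = θ(ψ) ψ⁰`. -/
def uf (ψ : Fin 2 → ℝ) : ℝ := θf ψ * ψ 0

/-- `v(ψ) = θ(ψ) ψ¹`. -/
def vf (ψ : Fin 2 → ℝ) : ℝ := θf ψ * ψ 1

/-- Ideal stress component `T⁰¹`. -/
def T01 (ψ : Fin 2 → ℝ) : ℝ := (4 / 3) * (θf ψ) ^ 4 * uf ψ * vf ψ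

/-- Ideal stress component `T¹¹`. -/
def T11 (ψ : Fin 2 → ℝ) : ℝ := (θf ψ) ^ 4 * ((4 / 3) * (vf ψ) ^ 2 + 1 / 3)

/-- `u = √(1+v²)` as a function of the velocity `v`. -/
def uu (v : ℝ) : ℝ := Real.sqrt (1 + v ^ 2)

/-- Viscosity matrix `B̃_visc(v)`. -/
def Bvisc (v : ℝ) : Matrix (Fin 2) (Fin 2) ℝ :=
  !![(uu v) ^ 2 * v ^ 2, -((uu v) ^ 3 * v); -((uu v) ^ 3 * v), (uu v) ^ 4]

/-- Thermal regulator matrix `B_ther(v)`. -/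
def Bther (v : ℝ) : Matrix (Fin 2) (Fin 2) ℝ :=
  !![16 * (uu v) ^ 2 * v ^ 2, -(4 * uu v * v * (4 * v ^ 2 + 1));
     -(4 * uu v * v * (4 * v ^ 2 + 1)), (4 * v ^ 2 + 1) ^ 2]

/-- Velocity regulator matrix `B_velo(v)`. -/
def Bvelo (v : ℝ) : Matrix (Fin 2) (Fin 2) ℝ :=
  !![((uu v) ^ 2 + v ^ 2) ^ 2, -(2 * ((uu v) ^ 2 + v ^ 2) * uu v * v);
     -(2 * ((uu v) ^ 2 + v ^ 2) * uu v * v), 4 * (uu v) ^ 2 * v ^ 2]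

/-- The full dissipation matrix `B(v) = η̃ B̃_visc − μ B_ther − ν B_velo`. -/
def Bmat (η μ ν v : ℝ) : Matrix (Fin 2) (Fin 2) ℝ :=
  η • Bvisc v - μ • Bther v - ν • Bvelo v

/-- The (rescaled) flux Jacobian `A(v)`. -/
def Amat (v : ℝ) : Matrix (Fin 2) (Fin 2) ℝ :=
  !![v * (6 * (uu v) ^ 2 - 1), -(uu v * (6 * v ^ 2 + 1));
     -(uu v * (6 * v ^ 2 + 1)), v * (6 * v ^ 2 + 3)]

/-- Upstream velocity `v₋(q̃)`. -/
def vminus (q : ℝ) : ℝ :=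
  Real.sqrt (((2 * q - 1) + Real.sqrt (q * (4 * q - 3))) / (4 * (1 - q)))

/-- Downstream velocity `v₊(q̃)`. -/
def vplus (q : ℝ) : ℝ :=
  Real.sqrt (((2 * q - 1) - Real.sqrt (q * (4 * q - 3))) / (4 * (1 - q)))

/-- The state `ψ` with velocity `v` on the Hugoniot curve `T¹¹ = 1`. -/
def psiOf (v : ℝ) : Fin 2 → ℝ :=
  ((4 / 3) * v ^ 2 + 1 / 3) ^ ((1 : ℝ) / 4) • ![Real.sqrt (1 + v ^ 2), v]

/-- Upstream state `ψ₋(q̃)`. -/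
def psiMinus (q : ℝ) : Fin 2 → ℝ := psiOf (vminus q)

/-- Downstream state `ψ₊(q̃)`. -/
def psiPlus (q : ℝ) : Fin 2 → ℝ := psiOf (vplus q)

/-- `ψ : ℝ → Ψ` is a C¹ solution of the profile ODE
`B(v(ψ))·ψ' = (T⁰¹(ψ) − q̃^(−1/2), T¹¹(ψ) − 1)`. -/
def ProfileSolution (η μ ν q : ℝ) (ψ : ℝ → Fin 2 → ℝ) : Prop :=
  ContDiff ℝ 1 ψ ∧ (∀ t, StateSpace (ψ t)) ∧
  ∀ t, (Bmat η μ ν (vf (ψ t))).mulVec (deriv ψ t) =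
    ![T01 (ψ t) - (Real.sqrt q)⁻¹, T11 (ψ t) - 1]

end
namespace RHaux
open Real Set

lemma state_facts {ψ : Fin 2 → ℝ} (h : StateSpace ψ) :
    0 < ψ 0 ^ 2 - ψ 1 ^ 2 ∧ 0 < ψ 0 := by
  have h1 : |ψ 1| < ψ 0 := h
  have h0 : 0 < ψ 0 := lt_of_le_of_lt (abs_nonneg _) h1
  have : ψ 1 ^ 2 < ψ 0 ^ 2 := by
    have := sq_abs (ψ 1)
    nlinarith [abs_nonneg (ψ 1)]
  exact ⟨by linarith, h0⟩

lemma theta_sq {ψ : Fin 2 → ℝ} (h : StateSpace ψ) :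
    (θf ψ) ^ 2 = (ψ 0 ^ 2 - ψ 1 ^ 2)⁻¹ := by
  have hr := (state_facts h).1
  unfold θf
  rw [inv_pow, Real.sq_sqrt hr.le]

lemma theta_pos {ψ : Fin 2 → ℝ} (h : StateSpace ψ) : 0 < θf ψ := by
  have hr := (state_facts h).1
  unfold θf
  positivity

lemma T01_eq {ψ : Fin 2 → ℝ} (h : StateSpace ψ) :
    T01 ψ = 4 * ψ 0 * ψ 1 / (3 * (ψ 0 ^ 2 - ψ 1 ^ 2) ^ 3) := by
  have hr := (state_facts h).1
  have h2 := theta_sq h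
  have h6 : (θf ψ) ^ 6 = ((ψ 0 ^ 2 - ψ 1 ^ 2) ^ 3)⁻¹ := by
    rw [show (6:ℕ) = 2 * 3 from rfl, pow_mul, h2, inv_pow]
  unfold T01 uf vf
  rw [show (4/3:ℝ) * θf ψ ^ 4 * (θf ψ * ψ 0) * (θf ψ * ψ 1)
      = θf ψ ^ 6 * (4/3 * (ψ 0 * ψ 1)) by ring, h6]
  field_simp

lemma T11_eq {ψ : Fin 2 → ℝ} (h : StateSpace ψ) :
    T11 ψ = (ψ 0 ^ 2 + 3 * ψ 1 ^ 2) / (3 * (ψ 0 ^ 2 - ψ 1 ^ 2) ^ 3) := by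
  have hr := (state_facts h).1
  have h2 := theta_sq h
  have h4 : (θf ψ) ^ 4 = ((ψ 0 ^ 2 - ψ 1 ^ 2) ^ 2)⁻¹ := by
    rw [show (4:ℕ) = 2 * 2 from rfl, pow_mul, h2, inv_pow]
  have h6 : (θf ψ) ^ 6 = ((ψ 0 ^ 2 - ψ 1 ^ 2) ^ 3)⁻¹ := by
    rw [show (6:ℕ) = 2 * 3 from rfl, pow_mul, h2, inv_pow]
  unfold T11 vf
  rw [show θf ψ ^ 4 * (4/3 * (θf ψ * ψ 1) ^ 2 + 1/3)
      = θf ψ ^ 6 * (4/3 * ψ 1 ^ 2) + θf ψ ^ 4 * (1/3) by ring, h6, h4]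
  field_simp
  ring

noncomputable def cfun (q1 v : ℝ) : ℝ := Real.sqrt (Real.sqrt ((4 * v ^ 2 + 1) / (3 * q1)))

noncomputable def Phi (q1 v : ℝ) : Fin 2 → ℝ :=
  ![cfun q1 v * Real.sqrt (1 + v ^ 2), cfun q1 v * v]

def Vset (q0 q1 : ℝ) : Set ℝ := {v | 4 * q1 * v * Real.sqrt (1 + v ^ 2) = q0 * (4 * v ^ 2 + 1)}

lemma cfun_pos {q1 : ℝ} (hq1 : 0 < q1) (v : ℝ) : 0 < cfun q1 v := by
  unfold cfun
  have h1 : (0:ℝ) < (4 * v ^ 2 + 1) / (3 * q1) := by positivity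
  positivity

lemma cfun_pow4 {q1 : ℝ} (hq1 : 0 < q1) (v : ℝ) :
    cfun q1 v ^ 4 = (4 * v ^ 2 + 1) / (3 * q1) := by
  unfold cfun
  have h1 : (0:ℝ) ≤ (4 * v ^ 2 + 1) / (3 * q1) := by positivity
  rw [show (4:ℕ) = 2 * 2 from rfl, pow_mul, Real.sq_sqrt (Real.sqrt_nonneg _),
    Real.sq_sqrt h1]

lemma Phi_mem_sol {q0 q1 : ℝ} (hq1 : 0 < q1) {v : ℝ} (hv : v ∈ Vset q0 q1) :
    Phi q1 v ∈ {ψ : Fin 2 → ℝ | StateSpace ψ ∧ T01 ψ = q0 ∧ T11 ψ = q1} := by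
  set c := cfun q1 v with hc
  have hcpos : 0 < c := cfun_pos hq1 v
  have hc4 : c ^ 4 = (4 * v ^ 2 + 1) / (3 * q1) := cfun_pow4 hq1 v
  have hc4' : c ^ 4 * (3 * q1) = 4 * v ^ 2 + 1 := by
    rw [hc4]; field_simp
  have hu : Real.sqrt (1 + v ^ 2) ^ 2 = 1 + v ^ 2 := Real.sq_sqrt (by positivity)
  have hupos : 0 < Real.sqrt (1 + v ^ 2) := Real.sqrt_pos.mpr (by positivity)
  have h0 : Phi q1 v 0 = c * Real.sqrt (1 + v ^ 2) := rfl
  have h1 : Phi q1 v 1 = c * v := rfl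
  have hvu : |v| < Real.sqrt (1 + v ^ 2) := by
    rw [← Real.sqrt_sq_eq_abs]
    exact Real.sqrt_lt_sqrt (sq_nonneg v) (by linarith)
  have hstate : StateSpace (Phi q1 v) := by
    show |Phi q1 v 1| < Phi q1 v 0
    rw [h0, h1, abs_mul, abs_of_pos hcpos]
    exact mul_lt_mul_of_pos_left hvu hcpos
  have hden : ((c * Real.sqrt (1 + v ^ 2)) ^ 2 - (c * v) ^ 2) = c ^ 2 := by
    rw [mul_pow, mul_pow, hu]; ring
  have heq : 4 * q1 * v * Real.sqrt (1 + v ^ 2) = q0 * (4 * v ^ 2 + 1) := hv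
  refine ⟨hstate, ?_, ?_⟩
  · rw [T01_eq hstate, h0, h1, hden, div_eq_iff (by positivity)]
    refine mul_left_cancel₀ hq1.ne' ?_
    linear_combination c ^ 2 * heq - q0 * c ^ 2 * hc4'
  · rw [T11_eq hstate, h0, h1, hden, div_eq_iff (by positivity)]
    linear_combination c ^ 2 * hu - c ^ 2 * hc4'
lemma Phi_inj {q1 : ℝ} (hq1 : 0 < q1) : Function.Injective (Phi q1) := by
  intro v w h
  have h0 : cfun q1 v * Real.sqrt (1 + v ^ 2) = cfun q1 w * Real.sqrt (1 + w ^ 2) :=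
    congrFun h 0
  have h1 : cfun q1 v * v = cfun q1 w * w := congrFun h 1
  have hv := cfun_pos hq1 v
  have hw := cfun_pos hq1 w
  have huv : Real.sqrt (1 + v ^ 2) ^ 2 = 1 + v ^ 2 := Real.sq_sqrt (by positivity)
  have huw : Real.sqrt (1 + w ^ 2) ^ 2 = 1 + w ^ 2 := Real.sq_sqrt (by positivity)
  have e0 : cfun q1 v ^ 2 * (1 + v ^ 2) = cfun q1 w ^ 2 * (1 + w ^ 2) := by
    have := congrArg (· ^ 2) h0
    simpa [mul_pow, huv, huw] using this
  have e1 : cfun q1 v ^ 2 * v ^ 2 = cfun q1 w ^ 2 * w ^ 2 := by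
    have := congrArg (· ^ 2) h1
    simpa [mul_pow] using this
  have hcc : cfun q1 v ^ 2 = cfun q1 w ^ 2 := by linear_combination e0 - e1
  have hceq : cfun q1 v = cfun q1 w := by
    apply le_antisymm <;> nlinarith [hcc, hv, hw]
  rw [hceq] at h1
  exact mul_left_cancel₀ hw.ne' h1

lemma sol_subset {q0 q1 : ℝ} (hq1 : 0 < q1) :
    {ψ : Fin 2 → ℝ | StateSpace ψ ∧ T01 ψ = q0 ∧ T11 ψ = q1} ⊆ Phi q1 '' Vset q0 q1 := by
  rintro ψ ⟨hst, h01, h11⟩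
  have hr : 0 < ψ 0 ^ 2 - ψ 1 ^ 2 := (state_facts hst).1
  set r := ψ 0 ^ 2 - ψ 1 ^ 2 with hrdef
  have hsr : 0 < Real.sqrt r := Real.sqrt_pos.mpr hr
  have hsr2 : Real.sqrt r ^ 2 = r := Real.sq_sqrt hr.le
  set v := ψ 1 / Real.sqrt r with hvdef
  -- √(1+v²) = ψ 0 / √r
  have hpos0 := (state_facts hst).2
  have hu : Real.sqrt (1 + v ^ 2) = ψ 0 / Real.sqrt r := by
    rw [show 1 + v ^ 2 = (ψ 0 / Real.sqrt r) ^ 2 by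
      rw [hvdef, div_pow, div_pow, hsr2]; field_simp; ring]
    exact Real.sqrt_sq (by positivity)
  -- T11 equation gives r ^ 2 = (4 v² + 1)/(3 q1)
  have h11' : (ψ 0 ^ 2 + 3 * ψ 1 ^ 2) / (3 * r ^ 3) = q1 := by
    rw [← T11_eq hst]; exact h11
  have hr3 : (0:ℝ) < 3 * r ^ 3 := by positivity
  have h11'' : ψ 0 ^ 2 + 3 * ψ 1 ^ 2 = q1 * (3 * r ^ 3) := by
    rw [← h11']; field_simp
  have hv2 : v ^ 2 * r = ψ 1 ^ 2 := by
    rw [hvdef, div_pow, hsr2]; field_simp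
  have hrq : r ^ 2 * (3 * q1) = 4 * v ^ 2 + 1 := by
    have : ψ 0 ^ 2 = r + ψ 1 ^ 2 := by rw [hrdef]; ring
    nlinarith [h11'', hv2, hr]
  -- cfun q1 v = √r
  have hcf : cfun q1 v = Real.sqrt r := by
    unfold cfun
    rw [show (4 * v ^ 2 + 1) / (3 * q1) = r ^ 2 by
      rw [← hrq]; field_simp]
    rw [Real.sqrt_sq hr.le]
  -- membership of v in Vset
  have h01' : 4 * ψ 0 * ψ 1 / (3 * r ^ 3) = q0 := by
    rw [← T01_eq hst]; exact h01
  have h01'' : 4 * ψ 0 * ψ 1 = q0 * (3 * r ^ 3) := by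
    rw [← h01']; field_simp
  have hmem : v ∈ Vset q0 q1 := by
    show 4 * q1 * v * Real.sqrt (1 + v ^ 2) = q0 * (4 * v ^ 2 + 1)
    rw [hu, hvdef, ← hrq]
    have hss : Real.sqrt r * Real.sqrt r = r := Real.mul_self_sqrt hr.le
    rw [show 4 * q1 * (ψ 1 / Real.sqrt r) * (ψ 0 / Real.sqrt r)
        = 4 * q1 * ψ 1 * ψ 0 / (Real.sqrt r * Real.sqrt r) by ring, hss,
      div_eq_iff hr.ne']
    linear_combination q1 * h01''
  refine ⟨v, hmem, ?_⟩
  funext i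
  fin_cases i
  · show cfun q1 v * Real.sqrt (1 + v ^ 2) = ψ 0
    rw [hcf, hu]; field_simp
  · show cfun q1 v * v = ψ 1
    rw [hcf, hvdef]; field_simp

lemma sol_eq_image {q0 q1 : ℝ} (hq1 : 0 < q1) :
    {ψ : Fin 2 → ℝ | StateSpace ψ ∧ T01 ψ = q0 ∧ T11 ψ = q1} = Phi q1 '' Vset q0 q1 := by
  refine subset_antisymm (sol_subset hq1) ?_
  rintro ψ ⟨v, hv, rfl⟩
  exact Phi_mem_sol hq1 hv

lemma sol_encard {q0 q1 : ℝ} (hq1 : 0 < q1) :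
    {ψ : Fin 2 → ℝ | StateSpace ψ ∧ T01 ψ = q0 ∧ T11 ψ = q1}.encard = (Vset q0 q1).encard := by
  rw [sol_eq_image hq1]
  exact Set.InjOn.encard_image fun a _ b _ h => Phi_inj hq1 h
lemma sqinj {a b : ℝ} (ha : 0 ≤ a) (hb : 0 ≤ b) (h : a ^ 2 = b ^ 2) : a = b := by
  apply le_antisymm <;> nlinarith

lemma vset_basic {q0 q1 v : ℝ} (hq1 : 0 < q1) (hq0 : q0 ≠ 0) (hv : v ∈ Vset q0 q1) :
    0 < q0 * v ∧ 16 * (q0^2 - q1^2) * v^4 + 8 * (q0^2 - 2*q1^2) * v^2 + q0^2 = 0 := by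
  have hv' : 4 * q1 * v * Real.sqrt (1 + v ^ 2) = q0 * (4 * v ^ 2 + 1) := hv
  have huv : Real.sqrt (1 + v ^ 2) ^ 2 = 1 + v ^ 2 := Real.sq_sqrt (by positivity)
  have hupos : 0 < Real.sqrt (1 + v ^ 2) := Real.sqrt_pos.mpr (by positivity)
  have hvne : v ≠ 0 := by
    intro h0
    rw [h0] at hv'
    simp at hv'
    exact hq0 (by linarith)
  have hv2 : 0 < v ^ 2 := by positivity
  have h1 : 0 < q0 * v * (4 * v ^ 2 + 1) := by
    have : q0 * v * (4 * v ^ 2 + 1) = 4 * q1 * v ^ 2 * Real.sqrt (1 + v ^ 2) := by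
      linear_combination (-v) * hv'
    rw [this]
    positivity
  have h2 : (0:ℝ) < 4 * v ^ 2 + 1 := by positivity
  refine ⟨by nlinarith [h1, h2], ?_⟩
  have hsq : 16*q1^2*v^2*(1+v^2) = q0^2*(4*v^2+1)^2 := by
    linear_combination (4*q1*v*Real.sqrt (1+v^2) + q0*(4*v^2+1)) * hv'
      - 16*q1^2*v^2 * huv
  linear_combination -hsq

lemma vset_nontrivial {q0 q1 : ℝ} (hq1 : 0 < q1) (h : (Vset q0 q1).Nontrivial) :
    q1 ^ 2 < q0 ^ 2 ∧ q0 ^ 2 < (4/3) * q1 ^ 2 := by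
  obtain ⟨v, hv, w, hw, hvw⟩ := h
  have hq0 : q0 ≠ 0 := by
    intro h0
    subst h0
    have hv' : 4 * q1 * v * Real.sqrt (1 + v ^ 2) = 0 := by
      have h' : 4 * q1 * v * Real.sqrt (1 + v ^ 2) = 0 * (4 * v ^ 2 + 1) := hv
      simpa using h'
    have hw' : 4 * q1 * w * Real.sqrt (1 + w ^ 2) = 0 := by
      have h' : 4 * q1 * w * Real.sqrt (1 + w ^ 2) = 0 * (4 * w ^ 2 + 1) := hw
      simpa using h'
    have hv0 : v = 0 := by
      have h1 : 0 < Real.sqrt (1 + v ^ 2) := Real.sqrt_pos.mpr (by positivity)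
      rcases mul_eq_zero.mp hv' with h' | h'
      · rcases mul_eq_zero.mp h' with h'' | h''
        · nlinarith
        · exact h''
      · exact absurd h' h1.ne'
    have hw0 : w = 0 := by
      have h1 : 0 < Real.sqrt (1 + w ^ 2) := Real.sqrt_pos.mpr (by positivity)
      rcases mul_eq_zero.mp hw' with h' | h'
      · rcases mul_eq_zero.mp h' with h'' | h''
        · nlinarith
        · exact h''
      · exact absurd h' h1.ne'
    exact hvw (hv0.trans hw0.symm)
  obtain ⟨hsv, Pv⟩ := vset_basic hq1 hq0 hv
  obtain ⟨hsw, Pw⟩ := vset_basic hq1 hq0 hw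
  -- v² ≠ w²
  have hst : v ^ 2 ≠ w ^ 2 := by
    intro h
    have habs : |v| = |w| := by
      have := congrArg Real.sqrt h
      rwa [Real.sqrt_sq_eq_abs, Real.sqrt_sq_eq_abs] at this
    rcases abs_eq_abs.mp habs with h' | h'
    · exact hvw h'
    · rw [h'] at hsv; nlinarith
  have hvpos : 0 < v ^ 2 := by
    rcases eq_or_ne v 0 with h' | h'
    · rw [h'] at hsv; simp at hsv
    · positivity
  have hwpos : 0 < w ^ 2 := by
    rcases eq_or_ne w 0 with h' | h'
    · rw [h'] at hsw; simp at hsw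
    · positivity
  have hfac : (v^2 - w^2) * (16*(q0^2-q1^2)*(v^2+w^2) + 8*(q0^2-2*q1^2)) = 0 := by
    linear_combination Pv - Pw
  have hsum : 16*(q0^2-q1^2)*(v^2+w^2) + 8*(q0^2-2*q1^2) = 0 := by
    rcases mul_eq_zero.mp hfac with h' | h'
    · exact absurd h' (sub_ne_zero.mpr hst)
    · exact h'
  have hprod : 16*(q0^2-q1^2)*(v^2*w^2) = q0^2 := by
    linear_combination v^2 * hsum - Pv
  have hq02 : 0 < q0 ^ 2 := by positivity
  have hA : q1 ^ 2 < q0 ^ 2 := by nlinarith [mul_pos hvpos hwpos]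
  refine ⟨hA, ?_⟩
  have hE2 : (32*(q0^2-q1^2)*v^2 + 8*(q0^2-2*q1^2))^2 = 64*q1^2*(4*q1^2-3*q0^2) := by
    linear_combination 64*(q0^2-q1^2) * Pv
  have hEw : 32*(q0^2-q1^2)*w^2 + 8*(q0^2-2*q1^2)
      = -(32*(q0^2-q1^2)*v^2 + 8*(q0^2-2*q1^2)) := by
    linear_combination 2 * hsum
  have hEne : 32*(q0^2-q1^2)*v^2 + 8*(q0^2-2*q1^2) ≠ 0 := by
    intro h0
    rw [h0, neg_zero] at hEw
    have hApos : 0 < q0 ^ 2 - q1 ^ 2 := by linarith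
    have h32 : 32*(q0^2-q1^2)*v^2 = 32*(q0^2-q1^2)*w^2 := by linarith [hEw]
    exact hst (mul_left_cancel₀ (by positivity) h32)
  have hE2pos : 0 < (32*(q0^2-q1^2)*v^2 + 8*(q0^2-2*q1^2))^2 :=
    lt_of_le_of_ne (sq_nonneg _) (Ne.symm (pow_ne_zero 2 hEne))
  have hq12 : 0 < q1 ^ 2 := by positivity
  nlinarith [hE2, hE2pos, hq12]
lemma mem_vset_of_sq {q0 q1 s : ℝ} (hq1 : 0 < q1) (hq0 : q0 ≠ 0) (hs : 0 < s)
    (hP : 16*(q0^2-q1^2)*s^2 + 8*(q0^2-2*q1^2)*s + q0^2 = 0) :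
    (q0 / |q0|) * Real.sqrt s ∈ Vset q0 q1 := by
  have habs : |q0| ≠ 0 := abs_ne_zero.mpr hq0
  have hv2 : ((q0 / |q0|) * Real.sqrt s) ^ 2 = s := by
    rw [mul_pow, div_pow, sq_abs, Real.sq_sqrt hs.le]
    field_simp
  show 4 * q1 * ((q0 / |q0|) * Real.sqrt s) * Real.sqrt (1 + ((q0 / |q0|) * Real.sqrt s) ^ 2)
      = q0 * (4 * ((q0 / |q0|) * Real.sqrt s) ^ 2 + 1)
  rw [hv2]
  have hss : Real.sqrt s ^ 2 = s := Real.sq_sqrt hs.le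
  have hs1 : Real.sqrt (1 + s) ^ 2 = 1 + s := Real.sq_sqrt (by linarith)
  have claim : 4 * q1 * (Real.sqrt s * Real.sqrt (1 + s)) = |q0| * (4 * s + 1) := by
    apply sqinj (by positivity) (by positivity)
    have e1 : (4 * q1 * (Real.sqrt s * Real.sqrt (1 + s))) ^ 2
        = 16 * q1 ^ 2 * (s * (1 + s)) := by
      rw [mul_pow, mul_pow, mul_pow, hss, hs1]; ring
    have e2 : (|q0| * (4 * s + 1)) ^ 2 = q0 ^ 2 * (4 * s + 1) ^ 2 := by
      rw [mul_pow, sq_abs]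
    rw [e1, e2]
    linear_combination -hP
  have hσ : q0 / |q0| * |q0| = q0 := by field_simp
  calc 4 * q1 * ((q0 / |q0|) * Real.sqrt s) * Real.sqrt (1 + s)
      = (q0 / |q0|) * (4 * q1 * (Real.sqrt s * Real.sqrt (1 + s))) := by ring
    _ = (q0 / |q0|) * (|q0| * (4 * s + 1)) := by rw [claim]
    _ = q0 * (4 * s + 1) := by rw [← mul_assoc, hσ]

lemma vset_pair {q0 q1 : ℝ} (hq1 : 0 < q1) (h1 : q1 ^ 2 < q0 ^ 2)
    (h2 : q0 ^ 2 < (4/3) * q1 ^ 2) : (Vset q0 q1).encard = 2 := by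
  have hq0 : q0 ≠ 0 := by intro h; rw [h] at h1; nlinarith
  have habs : |q0| ≠ 0 := abs_ne_zero.mpr hq0
  have hq02 : 0 < q0 ^ 2 := by positivity
  have hApos : 0 < q0 ^ 2 - q1 ^ 2 := by linarith
  have hDrad : 0 < 4 * q1 ^ 2 - 3 * q0 ^ 2 := by nlinarith
  obtain ⟨D, hD2, hDpos⟩ : ∃ D : ℝ, D ^ 2 = q1 ^ 2 * (4 * q1 ^ 2 - 3 * q0 ^ 2) ∧ 0 < D :=
    ⟨q1 * Real.sqrt (4 * q1 ^ 2 - 3 * q0 ^ 2),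
     by rw [mul_pow, Real.sq_sqrt hDrad.le], by positivity⟩
  have hP0 : 0 < 2 * q1 ^ 2 - q0 ^ 2 := by nlinarith
  have hDlt : D < 2 * q1 ^ 2 - q0 ^ 2 := by nlinarith [hD2, hDpos, hq02, hApos]
  obtain ⟨s1, key1⟩ : ∃ s : ℝ, 4 * (q0 ^ 2 - q1 ^ 2) * s = 2 * q1 ^ 2 - q0 ^ 2 - D :=
    ⟨(2 * q1 ^ 2 - q0 ^ 2 - D) / (4 * (q0 ^ 2 - q1 ^ 2)), by field_simp⟩
  obtain ⟨s2, key2⟩ : ∃ s : ℝ, 4 * (q0 ^ 2 - q1 ^ 2) * s = 2 * q1 ^ 2 - q0 ^ 2 + D :=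
    ⟨(2 * q1 ^ 2 - q0 ^ 2 + D) / (4 * (q0 ^ 2 - q1 ^ 2)), by field_simp⟩
  have hs1pos : 0 < s1 := by nlinarith [key1]
  have hs2pos : 0 < s2 := by nlinarith [key2]
  have hs12 : s1 ≠ s2 := by
    intro h
    rw [h] at key1
    linarith [key2]
  have hP1 : 16*(q0^2-q1^2)*s1^2 + 8*(q0^2-2*q1^2)*s1 + q0^2 = 0 := by
    have e : (4*(q0^2-q1^2)*s1) ^ 2 = (2*q1^2 - q0^2 - D)^2 := by rw [key1]
    refine mul_left_cancel₀ (show (q0^2 - q1^2) ≠ 0 by linarith) ?_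
    linear_combination e - 2*(2*q1^2-q0^2) * key1 + hD2
  have hP2 : 16*(q0^2-q1^2)*s2^2 + 8*(q0^2-2*q1^2)*s2 + q0^2 = 0 := by
    have e : (4*(q0^2-q1^2)*s2) ^ 2 = (2*q1^2 - q0^2 + D)^2 := by rw [key2]
    refine mul_left_cancel₀ (show (q0^2 - q1^2) ≠ 0 by linarith) ?_
    linear_combination e - 2*(2*q1^2-q0^2) * key2 + hD2
  obtain ⟨v1, hv1def⟩ : ∃ v : ℝ, v = (q0 / |q0|) * Real.sqrt s1 := ⟨_, rfl⟩
  obtain ⟨v2, hv2def⟩ : ∃ v : ℝ, v = (q0 / |q0|) * Real.sqrt s2 := ⟨_, rfl⟩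
  have hv1m : v1 ∈ Vset q0 q1 := by rw [hv1def]; exact mem_vset_of_sq hq1 hq0 hs1pos hP1
  have hv2m : v2 ∈ Vset q0 q1 := by rw [hv2def]; exact mem_vset_of_sq hq1 hq0 hs2pos hP2
  have hv1sq : v1 ^ 2 = s1 := by
    rw [hv1def, mul_pow, div_pow, sq_abs, Real.sq_sqrt hs1pos.le]; field_simp
  have hv2sq : v2 ^ 2 = s2 := by
    rw [hv2def, mul_pow, div_pow, sq_abs, Real.sq_sqrt hs2pos.le]; field_simp
  have hv12 : v1 ≠ v2 := by
    intro h
    rw [h, hv2sq] at hv1sq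
    exact hs12 hv1sq.symm
  have hset : Vset q0 q1 = {v1, v2} := by
    apply subset_antisymm
    · intro v hv
      obtain ⟨hsgn, Pv⟩ := vset_basic hq1 hq0 hv
      have hfac : (4*(q0^2-q1^2)*v^2 - (2*q1^2-q0^2-D))
          * (4*(q0^2-q1^2)*v^2 - (2*q1^2-q0^2+D)) = 0 := by
        linear_combination (q0^2-q1^2) * Pv - hD2
      have hcase : v ^ 2 = s1 ∨ v ^ 2 = s2 := by
        rcases mul_eq_zero.mp hfac with h' | h'
        · left
          have : 4*(q0^2-q1^2)*v^2 = 4*(q0^2-q1^2)*s1 := by rw [key1]; linarith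
          exact mul_left_cancel₀ (show 4*(q0^2-q1^2) ≠ 0 from ne_of_gt (by linarith)) this
        · right
          have : 4*(q0^2-q1^2)*v^2 = 4*(q0^2-q1^2)*s2 := by rw [key2]; linarith
          exact mul_left_cancel₀ (show 4*(q0^2-q1^2) ≠ 0 from ne_of_gt (by linarith)) this
      have hsame : ∀ w, w ∈ Vset q0 q1 → v ^ 2 = w ^ 2 → v = w := by
        intro w hwm hsq
        obtain ⟨hsgnw, _⟩ := vset_basic hq1 hq0 hwm
        have habs2 : |v| = |w| := by
          have := congrArg Real.sqrt hsq
          rwa [Real.sqrt_sq_eq_abs, Real.sqrt_sq_eq_abs] at this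
        rcases abs_eq_abs.mp habs2 with h' | h'
        · exact h'
        · exfalso; rw [h'] at hsgn; nlinarith
      rcases hcase with h' | h'
      · left; exact hsame v1 hv1m (by rw [hv1sq]; exact h')
      · right; exact hsame v2 hv2m (by rw [hv2sq]; exact h')
    · intro v hv
      rcases hv with h' | h'
      · rw [h']; exact hv1m
      · rw [mem_singleton_iff.mp h']; exact hv2m
  rw [hset]
  exact Set.encard_pair hv12
lemma T11_pos {ψ : Fin 2 → ℝ} (h : StateSpace ψ) : 0 < T11 ψ := by
  unfold T11
  exact mul_pos (pow_pos (theta_pos h) 4) (by positivity)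

lemma sol_empty {q0 q1 : ℝ} (hq1 : q1 ≤ 0) :
    {ψ : Fin 2 → ℝ | StateSpace ψ ∧ T01 ψ = q0 ∧ T11 ψ = q1} = ∅ := by
  ext ψ
  simp only [Set.mem_empty_iff_false, iff_false, Set.mem_setOf_eq, not_and]
  intro hst _ h11
  linarith [T11_pos hst]

end RHaux
/-- Lemma 1: the Rankine–Hugoniot solution set has more than one element iff
`q¹ > 0` and `(q¹)² < (q⁰)² < (4/3)(q¹)²`, and in that case exactly two. -/
theorem rankine_hugoniot_solution_set (q0 q1 : ℝ) :
    (1 < {ψ : Fin 2 → ℝ | StateSpace ψ ∧ T01 ψ = q0 ∧ T11 ψ = q1}.encard ↔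
      0 < q1 ∧ q1 ^ 2 < q0 ^ 2 ∧ q0 ^ 2 < (4 / 3) * q1 ^ 2) ∧
    ((0 < q1 ∧ q1 ^ 2 < q0 ^ 2 ∧ q0 ^ 2 < (4 / 3) * q1 ^ 2) →
      {ψ : Fin 2 → ℝ | StateSpace ψ ∧ T01 ψ = q0 ∧ T11 ψ = q1}.encard = 2) := by
  constructor
  · constructor
    · intro h
      by_cases hq1 : 0 < q1
      · rw [RHaux.sol_encard hq1] at h
        obtain ⟨a, b, hma, hmb, hne⟩ := Set.one_lt_encard_iff.mp h
        obtain ⟨ha, hb⟩ := RHaux.vset_nontrivial hq1 ⟨a, hma, b, hmb, hne⟩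
        exact ⟨hq1, ha, hb⟩
      · rw [RHaux.sol_empty (le_of_not_gt hq1), Set.encard_empty] at h
        exact absurd h (by norm_num)
    · rintro ⟨hq1, ha, hb⟩
      rw [RHaux.sol_encard hq1, RHaux.vset_pair hq1 ha hb]
      norm_num
  · rintro ⟨hq1, ha, hb⟩
    rw [RHaux.sol_encard hq1]
    exact RHaux.vset_pair hq1 ha hb
end

section
/- For every q̃ ∈ (3/4, 1), the solution set {ψ ∈ Ψ : T⁰¹(ψ) = q̃^(−1/2) and T¹¹(ψ) = 1} equals exactly {ψ₋(q̃), ψ₊(q̃)}, and ψ₋(q̃) ≠ ψ₊(q̃); in particular ψ₋(q̃) and ψ₊(q̃) are the only rest points of the profile ODE. -/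
open Real Matrix Filter Topology Set

/-!
A state is determined by its temperature and velocity: `ψ = θ⁻¹ • (√(1 + v²), v)`, and `θ` scales
like `c⁻¹` under `ψ ↦ c • ψ` while `u, v` are scale invariant. So `T¹¹ = 1` fixes `θ` in terms of
`v`, which makes the curve `T¹¹ = 1` in `Ψ` exactly the image of `psiOf`. Along it
`T⁰¹ = 4 v √(1 + v²) / (4 v² + 1)`, and `T⁰¹ = q̃^(-1/2)` becomes, after squaring, the quadratic
`16 (1 - q̃) w² - 8 (2 q̃ - 1) w + 1 = 0` in `w = v²`, whose roots are `v₋²` and `v₊²`; the sign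
of `T⁰¹` forces `v > 0`. Finally `ψ₋ ≠ ψ₊` because `v` recovers the state from `psiOf`.
-/

noncomputable def unitTempState (v : ℝ) : Fin 2 → ℝ := ![Real.sqrt (1 + v ^ 2), v]

noncomputable def hugoniotScale (v : ℝ) : ℝ := ((4 / 3) * v ^ 2 + 1 / 3) ^ ((1 : ℝ) / 4)

lemma psiOf_eq_smul (v : ℝ) : psiOf v = hugoniotScale v • unitTempState v := rfl

lemma hugoniotScale_pos (v : ℝ) : 0 < hugoniotScale v :=
  Real.rpow_pos_of_pos (by positivity) _

lemma hugoniotScale_pow_four (v : ℝ) : hugoniotScale v ^ 4 = (4 / 3) * v ^ 2 + 1 / 3 := by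
  rw [hugoniotScale, ← Real.rpow_natCast, ← Real.rpow_mul (by positivity)]
  norm_num

lemma eq_hugoniotScale_of_pow_four {s v : ℝ} (hs : 0 < s) (h : s ^ 4 = (4 / 3) * v ^ 2 + 1 / 3) :
    s = hugoniotScale v := by
  rw [hugoniotScale, ← h, ← Real.rpow_natCast, ← Real.rpow_mul hs.le]
  norm_num

lemma θf_smul {c : ℝ} (hc : 0 < c) (ψ : Fin 2 → ℝ) : θf (c • ψ) = c⁻¹ * θf ψ := by
  have hsq : (c * ψ 0) ^ 2 - (c * ψ 1) ^ 2 = c ^ 2 * (ψ 0 ^ 2 - ψ 1 ^ 2) := by ring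
  simp only [θf, Pi.smul_apply, smul_eq_mul, hsq, Real.sqrt_mul (sq_nonneg c),
    Real.sqrt_sq hc.le, mul_inv]

lemma uf_smul {c : ℝ} (hc : 0 < c) (ψ : Fin 2 → ℝ) : uf (c • ψ) = uf ψ := by
  simp only [uf, θf_smul hc, Pi.smul_apply, smul_eq_mul]
  field_simp

lemma vf_smul {c : ℝ} (hc : 0 < c) (ψ : Fin 2 → ℝ) : vf (c • ψ) = vf ψ := by
  simp only [vf, θf_smul hc, Pi.smul_apply, smul_eq_mul]
  field_simp

lemma StateSpace.smul {c : ℝ} (hc : 0 < c) {ψ : Fin 2 → ℝ} (hψ : StateSpace ψ) :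
    StateSpace (c • ψ) := by
  simp only [StateSpace, Pi.smul_apply, smul_eq_mul, abs_mul, abs_of_pos hc] at hψ ⊢
  exact mul_lt_mul_of_pos_left hψ hc

lemma θf_unitTempState (v : ℝ) : θf (unitTempState v) = 1 := by
  simp [θf, unitTempState, Real.sq_sqrt (by positivity : (0 : ℝ) ≤ 1 + v ^ 2)]

lemma uf_unitTempState (v : ℝ) : uf (unitTempState v) = Real.sqrt (1 + v ^ 2) := by
  rw [uf, θf_unitTempState, one_mul]
  rfl

lemma vf_unitTempState (v : ℝ) : vf (unitTempState v) = v := by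
  rw [vf, θf_unitTempState, one_mul]
  rfl

lemma stateSpace_unitTempState (v : ℝ) : StateSpace (unitTempState v) := by
  show |v| < Real.sqrt (1 + v ^ 2)
  rw [Real.lt_sqrt (abs_nonneg v), sq_abs]
  linarith

lemma StateSpace.θf_pos {ψ : Fin 2 → ℝ} (hψ : StateSpace ψ) : 0 < θf ψ := by
  have := abs_lt.1 hψ
  exact inv_pos.2 (Real.sqrt_pos.2 (by nlinarith))

lemma StateSpace.eq_smul_unitTempState {ψ : Fin 2 → ℝ} (hψ : StateSpace ψ) :
    ψ = (θf ψ)⁻¹ • unitTempState (vf ψ) := by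
  have hθ := hψ.θf_pos
  have hθsq : θf ψ ^ 2 * (ψ 0 ^ 2 - ψ 1 ^ 2) = 1 := by
    have := abs_lt.1 hψ
    rw [θf, inv_pow, Real.sq_sqrt (by nlinarith), inv_mul_cancel₀ (by nlinarith)]
  have hu : Real.sqrt (1 + vf ψ ^ 2) = θf ψ * ψ 0 := by
    rw [Real.sqrt_eq_iff_mul_self_eq_of_pos (mul_pos hθ ((abs_nonneg _).trans_lt hψ)), vf]
    linear_combination hθsq
  ext i
  fin_cases i
  · show ψ 0 = (θf ψ)⁻¹ * Real.sqrt (1 + vf ψ ^ 2)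
    rw [hu, inv_mul_cancel_left₀ hθ.ne']
  · show ψ 1 = (θf ψ)⁻¹ * vf ψ
    rw [vf, inv_mul_cancel_left₀ hθ.ne']

lemma stateSpace_psiOf (v : ℝ) : StateSpace (psiOf v) :=
  (stateSpace_unitTempState v).smul (hugoniotScale_pos v)

lemma θf_psiOf (v : ℝ) : θf (psiOf v) = (hugoniotScale v)⁻¹ := by
  rw [psiOf_eq_smul, θf_smul (hugoniotScale_pos v), θf_unitTempState, mul_one]

lemma vf_psiOf (v : ℝ) : vf (psiOf v) = v := by
  rw [psiOf_eq_smul, vf_smul (hugoniotScale_pos v), vf_unitTempState]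

lemma uf_psiOf (v : ℝ) : uf (psiOf v) = Real.sqrt (1 + v ^ 2) := by
  rw [psiOf_eq_smul, uf_smul (hugoniotScale_pos v), uf_unitTempState]

lemma psiOf_injective : Function.Injective psiOf :=
  Function.LeftInverse.injective vf_psiOf

lemma T11_psiOf (v : ℝ) : T11 (psiOf v) = 1 := by
  rw [T11, θf_psiOf, vf_psiOf, inv_pow, hugoniotScale_pow_four]
  exact inv_mul_cancel₀ (by positivity)

lemma T01_psiOf (v : ℝ) :
    T01 (psiOf v) = 4 * v * Real.sqrt (1 + v ^ 2) / (4 * v ^ 2 + 1) := by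
  rw [T01, θf_psiOf, vf_psiOf, uf_psiOf, inv_pow, hugoniotScale_pow_four]
  field_simp

lemma StateSpace.eq_psiOf_of_T11_eq_one {ψ : Fin 2 → ℝ} (hψ : StateSpace ψ) (hT : T11 ψ = 1) :
    ψ = psiOf (vf ψ) := by
  have hθ := hψ.θf_pos
  have hscale : (θf ψ)⁻¹ = hugoniotScale (vf ψ) := by
    refine eq_hugoniotScale_of_pow_four (inv_pos.2 hθ) ?_
    rw [T11] at hT
    field_simp
    linear_combination -3 * hT
  rw [psiOf_eq_smul, ← hscale]
  exact hψ.eq_smul_unitTempState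

lemma setOf_stress_eq_image_psiOf (c : ℝ) :
    {ψ : Fin 2 → ℝ | StateSpace ψ ∧ T01 ψ = c ∧ T11 ψ = 1} = psiOf '' {v | T01 (psiOf v) = c} := by
  ext ψ
  constructor
  · rintro ⟨hψ, h01, h11⟩
    have hψv := hψ.eq_psiOf_of_T11_eq_one h11
    exact ⟨vf ψ, show T01 (psiOf (vf ψ)) = c by rwa [← hψv], hψv.symm⟩
  · rintro ⟨v, hv, rfl⟩
    exact ⟨stateSpace_psiOf v, hv, T11_psiOf v⟩

lemma T01_psiOf_eq_inv_sqrt_iff {q : ℝ} (hq : 0 < q) (v : ℝ) :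
    T01 (psiOf v) = (Real.sqrt q)⁻¹ ↔
      0 < v ∧ 16 * q * v ^ 2 * (1 + v ^ 2) = (4 * v ^ 2 + 1) ^ 2 := by
  have hu : 0 < Real.sqrt (1 + v ^ 2) := Real.sqrt_pos.2 (by positivity)
  have hsq : 0 < Real.sqrt q := Real.sqrt_pos.2 hq
  have hden : 0 < 4 * v ^ 2 + 1 := by positivity
  have hsquare : (4 * v * Real.sqrt (1 + v ^ 2) * Real.sqrt q) ^ 2 =
      16 * q * v ^ 2 * (1 + v ^ 2) := by
    rw [mul_pow, mul_pow, mul_pow, Real.sq_sqrt (by positivity), Real.sq_sqrt hq.le]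
    ring
  rw [T01_psiOf, div_eq_iff hden.ne', inv_mul_eq_div, eq_div_iff hsq.ne', ← hsquare]
  constructor
  · intro h
    have hprod : 0 < 4 * v * Real.sqrt (1 + v ^ 2) * Real.sqrt q := h ▸ hden
    refine ⟨?_, by rw [h]⟩
    exact (mul_pos_iff_of_pos_left four_pos).1
      ((mul_pos_iff_of_pos_right hu).1 ((mul_pos_iff_of_pos_right hsq).1 hprod))
  · rintro ⟨hv, h⟩
    exact (sq_eq_sq₀ (by positivity) hden.le).1 h

lemma quartic_iff_sq_eq {q v : ℝ} (hq1 : q ≠ 1) (hq : 0 ≤ q * (4 * q - 3)) :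
    16 * q * v ^ 2 * (1 + v ^ 2) = (4 * v ^ 2 + 1) ^ 2 ↔
      v ^ 2 = ((2 * q - 1) + Real.sqrt (q * (4 * q - 3))) / (4 * (1 - q)) ∨
      v ^ 2 = ((2 * q - 1) - Real.sqrt (q * (4 * q - 3))) / (4 * (1 - q)) := by
  set r := Real.sqrt (q * (4 * q - 3))
  have hr : r ^ 2 = q * (4 * q - 3) := Real.sq_sqrt hq
  have hd : 4 * (1 - q) ≠ 0 := by intro h; apply hq1; linarith
  have hfactor :
      (v ^ 2 * (4 * (1 - q)) - (2 * q - 1 + r)) * (v ^ 2 * (4 * (1 - q)) - (2 * q - 1 - r)) =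
        (1 - q) * ((4 * v ^ 2 + 1) ^ 2 - 16 * q * v ^ 2 * (1 + v ^ 2)) := by
    linear_combination (-1) * hr
  rw [eq_div_iff hd, eq_div_iff hd, ← sub_eq_zero (a := v ^ 2 * _), ← sub_eq_zero (a := v ^ 2 * _),
    ← mul_eq_zero, hfactor, mul_eq_zero, or_iff_right (sub_ne_zero.2 hq1.symm), sub_eq_zero, eq_comm]

lemma vplus_pos {q : ℝ} (hq : 1 / 2 < q) (hq1 : q < 1) : 0 < vplus q := by
  have hr : Real.sqrt (q * (4 * q - 3)) < 2 * q - 1 := by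
    rw [Real.sqrt_lt' (by linarith)]
    nlinarith
  exact Real.sqrt_pos.2 (div_pos (by linarith) (by linarith))

lemma vplus_lt_vminus {q : ℝ} (hq3 : 3 / 4 < q) (hq1 : q < 1) : vplus q < vminus q := by
  have hr : 0 < Real.sqrt (q * (4 * q - 3)) := Real.sqrt_pos.2 (by nlinarith)
  refine Real.sqrt_lt_sqrt ?_ (div_lt_div_of_pos_right (by linarith) (by linarith))
  exact Real.sqrt_pos.1 (vplus_pos (by linarith) hq1) |>.le

lemma pos_and_quartic_iff {q v : ℝ} (hq3 : 3 / 4 < q) (hq1 : q < 1) :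
    0 < v ∧ 16 * q * v ^ 2 * (1 + v ^ 2) = (4 * v ^ 2 + 1) ^ 2 ↔ v = vminus q ∨ v = vplus q := by
  have hplus := vplus_pos (by linarith) hq1
  have hminus := hplus.trans (vplus_lt_vminus hq3 hq1)
  rw [quartic_iff_sq_eq hq1.ne (by nlinarith)]
  constructor
  · rintro ⟨hv, hsq | hsq⟩
    · left; rw [vminus, ← hsq, Real.sqrt_sq hv.le]
    · right; rw [vplus, ← hsq, Real.sqrt_sq hv.le]
  · rintro (rfl | rfl)
    · exact ⟨hminus, .inl (Real.sq_sqrt (Real.sqrt_pos.1 hminus).le)⟩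
    · exact ⟨hplus, .inr (Real.sq_sqrt (Real.sqrt_pos.1 hplus).le)⟩

/-- For `q̃ ∈ (3/4,1)` the rest points of the profile ODE are exactly `ψ₋(q̃)` and `ψ₊(q̃)`. -/
theorem rest_points_are_exactly_psi_pm (q : ℝ) (hq : q ∈ Set.Ioo (3 / 4 : ℝ) 1) :
    {ψ : Fin 2 → ℝ | StateSpace ψ ∧ T01 ψ = (Real.sqrt q)⁻¹ ∧ T11 ψ = 1} =
      {psiMinus q, psiPlus q} ∧ psiMinus q ≠ psiPlus q := by
  obtain ⟨hq3, hq1⟩ := hq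
  have hvelocities : {v | T01 (psiOf v) = (Real.sqrt q)⁻¹} = {vminus q, vplus q} := by
    ext v
    exact (T01_psiOf_eq_inv_sqrt_iff (by linarith) v).trans (pos_and_quartic_iff hq3 hq1)
  refine ⟨?_, psiOf_injective.ne (vplus_lt_vminus hq3 hq1).ne'⟩
  rw [setOf_stress_eq_image_psiOf, hvelocities, Set.image_pair]
  rfl
end

section
/- For every q̃ ∈ (3/4, 1) one has v₊(q̃)² < 1/2 < v₋(q̃)², where v±(q̃)² = ((2q̃−1) ∓ √(q̃(4q̃−3)))/(4(1−q̃)). -/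
open Real Matrix Filter Topology Set

/-- For every `q̃ ∈ (3/4,1)`, `v₊(q̃)² < 1/2 < v₋(q̃)²`. -/
theorem vplus_sq_lt_half_lt_vminus_sq (q : ℝ) (hq : q ∈ Set.Ioo (3 / 4 : ℝ) 1) :
    (vplus q) ^ 2 < 1 / 2 ∧ 1 / 2 < (vminus q) ^ 2 := by
  obtain ⟨h1, h2⟩ := hq
  unfold vplus vminus
  set s := Real.sqrt (q * (4 * q - 3)) with hs
  have hs0 : 0 ≤ s := Real.sqrt_nonneg _
  have hs2 : s ^ 2 = q * (4 * q - 3) := Real.sq_sqrt (by nlinarith)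
  have hsle : s ≤ 2 * q - 1 := by nlinarith [sq_nonneg (s - (2 * q - 1))]
  have hsgt : 4 * q - 3 < s := by nlinarith [sq_nonneg (s + (4 * q - 3))]
  have hd : 0 < 4 * (1 - q) := by linarith
  constructor
  · rw [Real.sq_sqrt (div_nonneg (by linarith) hd.le)]
    rw [div_lt_iff₀ hd]; linarith
  · rw [Real.sq_sqrt (div_nonneg (by linarith) hd.le)]
    rw [lt_div_iff₀ hd]; nlinarith
end

section
/- If μ ≥ η̃ > 0 and ν = 9η̃μ/(4μ−η̃) (sharp causality), then for all v ∈ ℝ the determinant of B(v) equals ν((μ−η̃) − (8μ+η̃)v²); in particular det B(v) < 0 whenever v² > 1/8. -/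
open Real Matrix Filter Topology Set

/- The three matrices are rank one, `B̃_visc = u² w wᵀ`, `B_ther = a aᵀ`, `B_velo = b bᵀ`, and the
determinant of a combination of three rank-one `2 × 2` matrices only involves the `2 × 2` minors of
the vectors. On `u² = 1 + v²` these minors are `3v`, `u` and `1 − 2v²`, giving
`det B = −9η̃μ v²u² − η̃ν u⁴ + μν (1 − 2v²)²`; the sharp causality relation `ν (4μ − η̃) = 9η̃μ`
then collapses this to `ν ((μ − η̃) − (8μ + η̃) v²)`. -/

open Matrix

theorem Matrix.det_fin_two_smul_vecMulVec_add_add {R : Type*} [CommRing R] (a b c : R)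
    (x y z : Fin 2 → R) :
    (a • vecMulVec x x + b • vecMulVec y y + c • vecMulVec z z).det =
      a * b * (of ![x, y]).det ^ 2 + a * c * (of ![x, z]).det ^ 2 +
        b * c * (of ![y, z]).det ^ 2 := by
  simp only [det_fin_two, add_apply, Matrix.smul_apply, vecMulVec_apply, of_apply, cons_val_zero,
    cons_val_one, smul_eq_mul]
  ring

theorem uu_sq (v : ℝ) : uu v ^ 2 = 1 + v ^ 2 :=
  Real.sq_sqrt (by positivity)

theorem Bvisc_eq_smul_vecMulVec (v : ℝ) :
    Bvisc v = uu v ^ 2 • vecMulVec ![v, -uu v] ![v, -uu v] := by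
  ext i j
  fin_cases i <;> fin_cases j <;>
    simp only [Bvisc, Matrix.smul_apply, vecMulVec_apply, of_apply, cons_val', cons_val_zero,
      cons_val_one, empty_val', cons_val_fin_one, Fin.zero_eta, Fin.mk_one, smul_eq_mul] <;> ring

theorem Bther_eq_vecMulVec (v : ℝ) :
    Bther v = vecMulVec ![4 * uu v * v, -(4 * v ^ 2 + 1)] ![4 * uu v * v, -(4 * v ^ 2 + 1)] := by
  ext i j
  fin_cases i <;> fin_cases j <;>
    simp only [Bther, vecMulVec_apply, of_apply, cons_val', cons_val_zero, cons_val_one,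
      empty_val', cons_val_fin_one, Fin.zero_eta, Fin.mk_one] <;> ring

theorem Bvelo_eq_vecMulVec (v : ℝ) :
    Bvelo v =
      vecMulVec ![uu v ^ 2 + v ^ 2, -(2 * uu v * v)] ![uu v ^ 2 + v ^ 2, -(2 * uu v * v)] := by
  ext i j
  fin_cases i <;> fin_cases j <;>
    simp only [Bvelo, vecMulVec_apply, of_apply, cons_val', cons_val_zero, cons_val_one,
      empty_val', cons_val_fin_one, Fin.zero_eta, Fin.mk_one] <;> ring

theorem det_Bmat (η μ ν v : ℝ) :
    (Bmat η μ ν v).det =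
      -9 * η * μ * v ^ 2 * (1 + v ^ 2) - η * ν * (1 + v ^ 2) ^ 2 + μ * ν * (1 - 2 * v ^ 2) ^ 2 := by
  have hB : Bmat η μ ν v =
      (η * uu v ^ 2) • vecMulVec ![v, -uu v] ![v, -uu v] +
        (-μ) • vecMulVec ![4 * uu v * v, -(4 * v ^ 2 + 1)] ![4 * uu v * v, -(4 * v ^ 2 + 1)] +
        (-ν) • vecMulVec ![uu v ^ 2 + v ^ 2, -(2 * uu v * v)]
          ![uu v ^ 2 + v ^ 2, -(2 * uu v * v)] := by
    rw [Bmat, Bvisc_eq_smul_vecMulVec, Bther_eq_vecMulVec, Bvelo_eq_vecMulVec, smul_smul,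
      neg_smul, neg_smul, ← sub_eq_add_neg, ← sub_eq_add_neg]
  have hvisc_ther : (of ![![v, -uu v], ![4 * uu v * v, -(4 * v ^ 2 + 1)]]).det = 3 * v := by
    rw [det_fin_two_of]; linear_combination 4 * v * uu_sq v
  have hvisc_velo : (of ![![v, -uu v], ![uu v ^ 2 + v ^ 2, -(2 * uu v * v)]]).det = uu v := by
    rw [det_fin_two_of]; linear_combination uu v * uu_sq v
  have hther_velo :
      (of ![![4 * uu v * v, -(4 * v ^ 2 + 1)], ![uu v ^ 2 + v ^ 2, -(2 * uu v * v)]]).det =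
        1 - 2 * v ^ 2 := by
    rw [det_fin_two_of]; linear_combination (1 - 4 * v ^ 2) * uu_sq v
  rw [hB, det_fin_two_smul_vecMulVec_add_add, hvisc_ther, hvisc_velo, hther_velo]
  linear_combination (-9 * η * μ * v ^ 2 - η * ν * (uu v ^ 2 + 1 + v ^ 2)) * uu_sq v

theorem det_Bmat_of_mul_eq {η μ ν : ℝ} (hν : ν * (4 * μ - η) = 9 * η * μ) (v : ℝ) :
    (Bmat η μ ν v).det = ν * ((μ - η) - (8 * μ + η) * v ^ 2) := by
  rw [det_Bmat]
  linear_combination v ^ 2 * (1 + v ^ 2) * hν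

/-- In the sharply causal case `ν = 9η̃μ/(4μ−η̃)`, `det B(v) = ν((μ−η̃) − (8μ+η̃)v²)`,
hence `det B(v) < 0` whenever `v² > 1/8`. -/
theorem det_B_sharply_causal (η μ : ℝ) (hη : 0 < η) (hμ : η ≤ μ) (v : ℝ) :
    (Bmat η μ (9 * η * μ / (4 * μ - η)) v).det =
      (9 * η * μ / (4 * μ - η)) * ((μ - η) - (8 * μ + η) * v ^ 2) ∧
    (1 / 8 < v ^ 2 → (Bmat η μ (9 * η * μ / (4 * μ - η)) v).det < 0) := by
  have hden : 0 < 4 * μ - η := by linarith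
  have hdet := det_Bmat_of_mul_eq (div_mul_cancel₀ (9 * η * μ) hden.ne') v
  refine ⟨hdet, fun hv => hdet ▸ mul_neg_of_pos_of_neg (div_pos (by nlinarith) hden) ?_⟩
  nlinarith
end

section
/- If μ ≥ η̃ > 0 and ν = 9η̃μ/(4μ−η̃) (sharp causality), then for every q̃ ∈ (3/4, 1) the matrix B(v₋(q̃)) is invertible, det( B(v₋(q̃))⁻¹ · A(v₋(q̃)) ) < 0, and consequently B(v₋(q̃))⁻¹·A(v₋(q̃)) has two real eigenvalues of opposite signs, i.e., the upstream state ψ₋(q̃) is a hyperbolic saddle of the profile ODE. (Lemma 2(ii).) -/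
open Real Matrix Filter Topology Set

lemma charpoly_root_aux (M : Matrix (Fin 2) (Fin 2) ℝ) (x : ℝ)
    (h : x ^ 2 - (M 0 0 + M 1 1) * x + (M 0 0 * M 1 1 - M 0 1 * M 1 0) = 0) :
    M.charpoly.IsRoot x := by
  rw [Matrix.charpoly, Polynomial.IsRoot, Matrix.det_fin_two]
  rw [Matrix.charmatrix_apply_eq, Matrix.charmatrix_apply_eq,
    Matrix.charmatrix_apply_ne _ _ _ (by decide), Matrix.charmatrix_apply_ne _ _ _ (by decide)]
  simp only [Polynomial.eval_sub, Polynomial.eval_mul, Polynomial.eval_neg, Polynomial.eval_X,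
    Polynomial.eval_C]
  linear_combination h

/-- Lemma 2(ii): in the sharply causal case, for every `q̃ ∈ (3/4,1)` the matrix
`B(v₋(q̃))` is invertible, `det(B(v₋)⁻¹ A(v₋)) < 0`, and `B(v₋)⁻¹ A(v₋)` has two
real eigenvalues of opposite signs, i.e. `ψ₋(q̃)` is a hyperbolic saddle. -/
theorem sharply_causal_upstream_is_saddle (η μ : ℝ) (hη : 0 < η) (hμ : η ≤ μ)
    (q : ℝ) (hq : q ∈ Set.Ioo (3 / 4 : ℝ) 1) :
    IsUnit (Bmat η μ (9 * η * μ / (4 * μ - η)) (vminus q)).det ∧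
    ((Bmat η μ (9 * η * μ / (4 * μ - η)) (vminus q))⁻¹ * Amat (vminus q)).det < 0 ∧
    ∃ a b : ℝ, a < 0 ∧ 0 < b ∧
      ((Bmat η μ (9 * η * μ / (4 * μ - η)) (vminus q))⁻¹ *
        Amat (vminus q)).charpoly.IsRoot a ∧
      ((Bmat η μ (9 * η * μ / (4 * μ - η)) (vminus q))⁻¹ *
        Amat (vminus q)).charpoly.IsRoot b := by
  obtain ⟨hq1, hq2⟩ := hq
  set ν : ℝ := 9 * η * μ / (4 * μ - η) with hνdef
  set v : ℝ := vminus q with hvdef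
  have h4 : (0:ℝ) < 4 * μ - η := by linarith
  have hνeq : ν * (4 * μ - η) = 9 * η * μ := by
    rw [hνdef]; exact div_mul_cancel₀ _ (ne_of_gt h4)
  have hE : (1:ℝ)/2 < ((2*q-1) + Real.sqrt (q*(4*q-3))) / (4*(1-q)) := by
    rw [lt_div_iff₀ (by linarith)]
    have := Real.sqrt_nonneg (q*(4*q-3))
    linarith
  have hv2 : (1:ℝ)/2 < v ^ 2 := by
    rw [hvdef, vminus, Real.sq_sqrt (by linarith)]
    exact hE
  have hu2 : (uu v) ^ 2 = 1 + v ^ 2 := Real.sq_sqrt (by positivity)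
  have hdetA : (Amat v).det = 2 * v ^ 2 - 1 := by
    simp only [Amat, Matrix.det_fin_two_of]
    linear_combination (6 * v ^ 2 - 1) * hu2
  have hdetB : (Bmat η μ ν v).det * (4 * μ - η)
      = 9 * η * μ * (μ * (1 - 8 * v ^ 2) - η * (1 + v ^ 2)) := by
    simp only [Bmat, Bvisc, Bther, Bvelo, Matrix.det_fin_two, Matrix.sub_apply,
      Matrix.smul_apply, Matrix.cons_val', Matrix.cons_val_zero, Matrix.cons_val_one,
      Matrix.head_cons, Matrix.head_fin_const, Matrix.empty_val', Matrix.cons_val_fin_one,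
      Matrix.of_apply, smul_eq_mul]
    linear_combination (4 * μ ^ 2 * ν + (-5) * η * μ * ν + η ^ 2 * ν + (-20) * v ^ 2 * μ ^ 2 * ν + v ^ 2 * η * μ * ν + (-36) * v ^ 2 * η * μ ^ 2 + v ^ 2 * η ^ 2 * ν + 9 * v ^ 2 * η ^ 2 * μ + 32 * v ^ 4 * μ ^ 2 * ν + (-8) * v ^ 4 * η * μ * ν + (-64) * v ^ 6 * μ ^ 2 * ν + 16 * v ^ 6 * η * μ * ν + 4 * uu v ^ 2 * μ ^ 2 * ν + (-5) * uu v ^ 2 * η * μ * ν + uu v ^ 2 * η ^ 2 * ν + (-32) * uu v ^ 2 * v ^ 2 * μ ^ 2 * ν + 8 * uu v ^ 2 * v ^ 2 * η * μ * ν + (-32) * uu v ^ 2 * v ^ 2 * η * μ ^ 2 + 8 * uu v ^ 2 * v ^ 2 * η ^ 2 * μ + 64 * uu v ^ 2 * v ^ 4 * μ ^ 2 * ν + (-16) * uu v ^ 2 * v ^ 4 * η * μ * ν + 64 * uu v ^ 2 * v ^ 4 * η * μ ^ 2 + (-16) * uu v ^ 2 * v ^ 4 * η ^ 2 * μ + (-4)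 * uu v ^ 4 * η * μ * ν + uu v ^ 4 * η ^ 2 * ν + 4 * uu v ^ 4 * v ^ 2 * η * μ * ν + (-64) * uu v ^ 4 * v ^ 2 * η * μ ^ 2 + (-1) * uu v ^ 4 * v ^ 2 * η ^ 2 * ν + 16 * uu v ^ 4 * v ^ 2 * η ^ 2 * μ + (-4) * uu v ^ 6 * η * μ * ν + uu v ^ 6 * η ^ 2 * ν) * hu2 + (μ - η + (-4) * v ^ 2 * μ + (-2) * v ^ 2 * η + 4 * v ^ 4 * μ + (-1) * v ^ 4 * η) * hνeq
  have hμpos : 0 < μ := lt_of_lt_of_le hη hμ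
  have hinner : μ * (1 - 8 * v ^ 2) - η * (1 + v ^ 2) < 0 := by
    nlinarith [mul_pos hμpos (by linarith : (0:ℝ) < 8 * v ^ 2 - 4),
      mul_pos hη (by positivity : (0:ℝ) < 1 + v ^ 2)]
  have hN : 9 * η * μ * (μ * (1 - 8 * v ^ 2) - η * (1 + v ^ 2)) < 0 :=
    mul_neg_of_pos_of_neg (by positivity) hinner
  have hBneg : (Bmat η μ ν v).det < 0 := by nlinarith
  have hdetBA : ((Bmat η μ ν v)⁻¹ * Amat v).det
      = ((Bmat η μ ν v).det)⁻¹ * (Amat v).det := by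
    rw [Matrix.det_mul, Matrix.det_nonsing_inv, Ring.inverse_eq_inv']
  have hBAneg : ((Bmat η μ ν v)⁻¹ * Amat v).det < 0 := by
    rw [hdetBA, hdetA]
    exact mul_neg_of_neg_of_pos (inv_lt_zero.mpr hBneg) (by nlinarith)
  refine ⟨isUnit_iff_ne_zero.mpr (ne_of_lt hBneg), hBAneg, ?_⟩
  set M : Matrix (Fin 2) (Fin 2) ℝ := (Bmat η μ ν v)⁻¹ * Amat v with hM
  clear_value M
  clear hM hdetBA hdetB hdetA hu2 hv2 hE hνeq hN hinner
  have hDdet : M.det = M 0 0 * M 1 1 - M 0 1 * M 1 0 := Matrix.det_fin_two M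
  have hDneg : M 0 0 * M 1 1 - M 0 1 * M 1 0 < 0 := by rw [← hDdet]; exact hBAneg
  set t : ℝ := M 0 0 + M 1 1 with htdef
  set D : ℝ := M 0 0 * M 1 1 - M 0 1 * M 1 0 with hDdef
  have hd0 : (0:ℝ) ≤ t ^ 2 - 4 * D := by nlinarith [sq_nonneg t]
  have hd2 : Real.sqrt (t ^ 2 - 4 * D) ^ 2 = t ^ 2 - 4 * D := Real.sq_sqrt hd0
  set d : ℝ := Real.sqrt (t ^ 2 - 4 * D) with hddef
  have hdn : (0:ℝ) ≤ d := hddef ▸ Real.sqrt_nonneg _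
  clear_value t D d
  have htd : t < d := by nlinarith
  have htd2 : -d < t := by nlinarith
  refine ⟨(t - d)/2, (t + d)/2, by linarith, by linarith, ?_, ?_⟩
  · exact charpoly_root_aux M _ (by rw [← htdef, ← hDdef]; linear_combination hd2 / 4)
  · exact charpoly_root_aux M _ (by rw [← htdef, ← hDdef]; linear_combination hd2 / 4)
end

section
/- For all η̃, μ, ν > 0, the determinant of B at the bifurcation velocity v = 1/√2 equals −(9/4)·η̃·(3μ+ν); in particular B(1/√2) is invertible. -/
open Real Matrix Filter Topology Set

/-- At the bifurcation velocity `v = 1/√2`, `det B = −(9/4)η̃(3μ+ν)`; in particular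
`B(1/√2)` is invertible. -/
theorem det_B_at_bifurcation (η μ ν : ℝ) (hη : 0 < η) (hμ : 0 < μ) (hν : 0 < ν) :
    (Bmat η μ ν (Real.sqrt 2)⁻¹).det = -(9 / 4) * η * (3 * μ + ν) ∧
    IsUnit (Bmat η μ ν (Real.sqrt 2)⁻¹).det := by
  set v : ℝ := (Real.sqrt 2)⁻¹ with hv
  have hv2 : v ^ 2 = 1 / 2 := by
    rw [hv, inv_pow, Real.sq_sqrt (by norm_num : (0:ℝ) ≤ 2)]; norm_num
  have hu2 : (uu v) ^ 2 = 3 / 2 := by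
    rw [uu, Real.sq_sqrt (by positivity), hv2]; norm_num
  have hdet : (Bmat η μ ν v).det = -(9 / 4) * η * (3 * μ + ν) := by
    simp [Bmat, Bvisc, Bther, Bvelo, Matrix.det_fin_two, Matrix.smul_apply,
      Matrix.sub_apply]
    linear_combination ((3/2) * μ * ν + (-27/8) * η * ν + (-10) * v ^ 2 * μ * ν + (9/2) * v ^ 2 * η * ν + (-25) * v ^ 2 * η * μ + (24) * v ^ 4 * μ * ν + (-3/2) * v ^ 4 * η * ν + (40) * v ^ 4 * η * μ + (-32) * v ^ 6 * μ * ν + (-16) * v ^ 6 * η * μ + (1) * uu v ^ 2 * μ * ν + (-9/4) * uu v ^ 2 * η * ν + (-8) * uu v ^ 2 * v ^ 2 * μ * ν + (3) * uu v ^ 2 * v ^ 2 * η * ν + (-16) * uu v ^ 2 * v ^ 2 * η * μ + (16) * uu v ^ 2 * v ^ 4 * μ * ν + (-1) * uu v ^ 2 * v ^ 4 * η * ν + (32) * uu v ^ 2 * v ^ 4 * η * μ + (-3/2) * uu v ^ 4 * η * ν + (2) * uu v ^ 4 * v ^ 2 * η * ν + (-16) * uu v ^ 4 * v ^ 2 *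 η * μ + (-1) * uu v ^ 6 * η * ν) * hu2 + ((-9/2) * μ * ν + (45/8) * η * ν + (-27/2) * η * μ + (21) * v ^ 2 * μ * ν + (-9/4) * v ^ 2 * η * ν + (48) * v ^ 2 * η * μ + (-32) * v ^ 4 * μ * ν + (-24) * v ^ 4 * η * μ + (16) * v ^ 6 * μ * ν) * hv2
  refine ⟨hdet, ?_⟩
  rw [hdet]
  have hne : -(9 / 4) * η * (3 * μ + ν) ≠ 0 := by nlinarith
  exact hne.isUnit
end

section
/- Let μ ≥ η̃ > 0 and ν > 0, and define π(X) = 9μνX² − 3μ(3η̃+2ν)X − ν(η̃−μ). Then π(1) = 4μν − (9μ+ν)η̃; both (real, nonnegative) roots of π are ≤ 1 if and only if ν ≥ 9η̃μ/(4μ−η̃); and 1 is a root of π if and only if ν = 9η̃μ/(4μ−η̃) (the sharply causal case, in which one characteristic speed of the dissipation operator is the speed of light). -/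
open Real Matrix Filter Topology Set

/-- Appendix: `π(1) = 4μν − (9μ+ν)η̃`; both (real, nonnegative) roots of `π` are `≤ 1`
iff `ν ≥ 9η̃μ/(4μ−η̃)`, and `1` is a root of `π` iff `ν = 9η̃μ/(4μ−η̃)` (sharp causality). -/
theorem dispersion_polynomial_causality (η μ ν : ℝ) (hη : 0 < η) (hμ : η ≤ μ) (hν : 0 < ν) :
    (9 * μ * ν * 1 ^ 2 - 3 * μ * (3 * η + 2 * ν) * 1 - ν * (η - μ) =
      4 * μ * ν - (9 * μ + ν) * η) ∧
    ((∀ x : ℝ,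
        9 * μ * ν * x ^ 2 - 3 * μ * (3 * η + 2 * ν) * x - ν * (η - μ) = 0 → x ≤ 1) ↔
      9 * η * μ / (4 * μ - η) ≤ ν) ∧
    ((9 * μ * ν * 1 ^ 2 - 3 * μ * (3 * η + 2 * ν) * 1 - ν * (η - μ) = 0) ↔
      ν = 9 * η * μ / (4 * μ - η)) := by
  
  have hμ0 : 0 < μ := lt_of_lt_of_le hη hμ
  have h4 : 0 < 4 * μ - η := by linarith
  refine ⟨by ring, ⟨?_, ?_⟩, ?_⟩
  · -- all roots ≤ 1 → ν ≥ ν*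
    intro h
    by_contra hlt
    push_neg at hlt
    rw [lt_div_iff₀ h4] at hlt
    have hP1 : 4 * μ * ν - (9 * μ + ν) * η < 0 := by nlinarith
    set D : ℝ := 9 * μ * η * (9 * μ * η + 12 * μ * ν + 4 * ν ^ 2) with hD
    have hDpos : 0 < D := by positivity
    have hs : Real.sqrt D ^ 2 = D := Real.sq_sqrt hDpos.le
    have hsnn := Real.sqrt_nonneg D
    set x : ℝ := (3 * μ * (3 * η + 2 * ν) + Real.sqrt D) / (18 * μ * ν) with hxdef
    have hden : (0:ℝ) < 18 * μ * ν := by positivity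
    have hroot : 9 * μ * ν * x ^ 2 - 3 * μ * (3 * η + 2 * ν) * x - ν * (η - μ) = 0 := by
      rw [hxdef]
      field_simp
      nlinarith [hs]
    have hxle := h x hroot
    have hsgt : 3 * μ * (4 * ν - 3 * η) < Real.sqrt D := by
      nlinarith [hs, hsnn]
    have hx1 : 1 < x := by
      rw [hxdef, lt_div_iff₀ hden]
      nlinarith
    linarith
  · -- ν ≥ ν* → all roots ≤ 1
    intro hge x hx
    rw [div_le_iff₀ h4] at hge
    by_contra hgt
    push_neg at hgt
    have h1 : 0 < x - 1 := by linarith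
    have h2 : 0 < 3 * ν * x + ν - 3 * η := by nlinarith [mul_pos hν h1, mul_pos hν hη, mul_pos hμ0 hν]
    nlinarith [mul_pos h1 h2]
  · constructor
    · intro h
      rw [eq_div_iff (ne_of_gt h4)]
      nlinarith
    · intro h
      rw [eq_div_iff (ne_of_gt h4)] at h
      nlinarith
end
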